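/- arXiv:2601.02087 — 2 statements merged into one kernel-verified Lean document; each statement's English description precedes it below -/
import Mathlib

section
/- Pivoting on an edge {u,v} swaps the neighborhoods of u and v: for any vertex w ∉ {u,v}, w is adjacent to u in G ∧ uv if and only if w is adjacent to v in G, and w is adjacent to v in G ∧ uv if and only if w is adjacent to u in G. -/
/-- Local complementation of a simple graph `G` at a vertex `u`: toggles all
edges between pairs of distinct neighbors of `u`, leaving all other edges unchanged. -/
def localComp {V : Type*} (G : SimpleGraph V) (u : V) : SimpleGraph V where
  Adj v w := v ≠ w ∧ Xor' (G.Adj v w) (G.Adj u v ∧ G.Adj u w)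
  symm := by
    constructor
    rintro v w ⟨h1, h2⟩
    refine ⟨h1.symm, ?_⟩
    rwa [G.adj_comm w v, and_comm]
  loopless := by constructor; rintro v ⟨h, _⟩; exact h rfl

/-- The pivot of `G` along the edge `{u,v}`: `G ∧ uv = ((G * u) * v) * u`. -/
def pivot {V : Type*} (G : SimpleGraph V) (u v : V) : SimpleGraph V :=
  localComp (localComp (localComp G u) v) u

/-!
Local complementation at `u` leaves the edges at `u` alone and, for a neighbour `a` of `u`,
adds the neighbourhood of `u` to that of `a` modulo 2. In `G * u` the vertex `v` therefore has
neighbourhood `N(v) + N(u)` off `{u, v}`; complementing at `v` then adds this to `N(u)`, leaving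
`N(v)` at `u`; the last complementation at `u` adds `N(v)` to `N(v) + N(u)`, leaving `N(u)` at `v`.
-/

namespace localComp

variable {V : Type*} (G : SimpleGraph V) {u a b : V}

theorem adj_self_left_iff : (localComp G u).Adj u b ↔ G.Adj u b := by
  change u ≠ b ∧ Xor (G.Adj u b) (G.Adj u u ∧ G.Adj u b) ↔ _
  simp only [G.loopless.irrefl u, false_and, xor_comm _ False, xor_false, id_eq,
    and_iff_right_iff_imp]
  exact G.ne_of_adj

theorem adj_of_adj_left_iff (hua : G.Adj u a) (hab : a ≠ b) :
    (localComp G u).Adj a b ↔ Xor (G.Adj a b) (G.Adj u b) := by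
  change a ≠ b ∧ Xor (G.Adj a b) (G.Adj u a ∧ G.Adj u b) ↔ _
  simp only [hab, hua, ne_eq, not_false_eq_true, true_and]

end localComp

open localComp in
/-- Pivoting on an edge `{u,v}` swaps the neighborhoods of `u` and `v`:
for any vertex `w ∉ {u,v}`, `w` is adjacent to `u` in `G ∧ uv` iff `w` is adjacent to
`v` in `G`, and `w` is adjacent to `v` in `G ∧ uv` iff `w` is adjacent to `u` in `G`. -/
theorem pivot_swaps_neighborhoods {V : Type*} (G : SimpleGraph V) (u v : V)
    (huv : G.Adj u v) (w : V) (hwu : w ≠ u) (hwv : w ≠ v) :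
    ((pivot G u v).Adj u w ↔ G.Adj v w) ∧ ((pivot G u v).Adj v w ↔ G.Adj u w) := by
  set G₁ := localComp G u
  set G₂ := localComp G₁ v
  have h₁uv : G₁.Adj u v := (adj_self_left_iff G).2 huv
  have h₁vw : G₁.Adj v w ↔ Xor (G.Adj v w) (G.Adj u w) := adj_of_adj_left_iff G huv hwv.symm
  have h₂uw : G₂.Adj u w ↔ G.Adj v w := by
    rw [adj_of_adj_left_iff G₁ h₁uv.symm hwu.symm, adj_self_left_iff, h₁vw]
    grind
  have h₂uv : G₂.Adj u v := ((adj_self_left_iff G₁).2 h₁uv.symm).symm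
  refine ⟨(adj_self_left_iff G₂).trans h₂uw, ?_⟩
  change (localComp G₂ u).Adj v w ↔ _
  rw [adj_of_adj_left_iff G₂ h₂uv hwv.symm, h₂uw, adj_self_left_iff, h₁vw]
  grind
end

section
/- Local complementation preserves connectivity: a simple graph G is connected if and only if G * u is connected, for any vertex u. -/
namespace SimpleGraph

variable {V : Type*} {G H : SimpleGraph V}

theorem reachable_le_of_adj_reachable (h : ∀ ⦃a b⦄, G.Adj a b → H.Reachable a b) :
    G.Reachable ≤ H.Reachable := by
  rw [reachable_eq_reflTransGen, reachable_eq_reflTransGen] at *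
  exact Relation.reflTransGen_closed h

theorem Preconnected.of_adj_reachable (hG : G.Preconnected)
    (h : ∀ ⦃a b⦄, G.Adj a b → H.Reachable a b) : H.Preconnected :=
  fun a b ↦ reachable_le_of_adj_reachable h a b (hG a b)

end SimpleGraph

open SimpleGraph

section

variable {V : Type*} {G : SimpleGraph V} {u v w : V}

theorem localComp_adj :
    (localComp G u).Adj v w ↔ v ≠ w ∧ Xor (G.Adj v w) (G.Adj u v ∧ G.Adj u w) :=
  Iff.rfl

theorem localComp_adj_left : (localComp G u).Adj u v ↔ G.Adj u v := by
  rw [localComp_adj]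
  have := G.irrefl (v := u)
  have := @G.ne_of_adj _ u v
  unfold Xor
  tauto

theorem localComp_localComp (G : SimpleGraph V) (u : V) : localComp (localComp G u) u = G := by
  ext v w
  rw [localComp_adj, localComp_adj_left, localComp_adj_left, localComp_adj]
  have := @G.ne_of_adj _ v w
  unfold Xor
  tauto

theorem localComp_reachable_of_adj (hvw : G.Adj v w) : (localComp G u).Reachable v w := by
  by_cases hu : G.Adj u v ∧ G.Adj u w
  · exact (localComp_adj_left.2 hu.1).reachable.symm.trans (localComp_adj_left.2 hu.2).reachable
  · exact Adj.reachable ⟨hvw.ne, Or.inl ⟨hvw, hu⟩⟩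

theorem SimpleGraph.Connected.localComp (hG : G.Connected) (u : V) : (localComp G u).Connected :=
  connected_iff _ |>.2
    ⟨hG.preconnected.of_adj_reachable fun _ _ ↦ localComp_reachable_of_adj, hG.nonempty⟩

end

/-- Local complementation preserves connectivity: `G` is connected iff `G * u` is connected. -/
theorem localComp_connected_iff {V : Type*} (G : SimpleGraph V) (u : V) :
    G.Connected ↔ (localComp G u).Connected :=
  ⟨(·.localComp u), fun h ↦ localComp_localComp G u ▸ h.localComp u⟩
end
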